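/- Let p be a prime, E a finite extension of ℚ_p with ring of integers 𝒪 and residue field k, and let R be a complete Noetherian local 𝒪-algebra with residue field k. Let C• be a cochain complex of finite R-modules and let T ∈ End_R(C•) be a chain endomorphism. Then, decomposing each term C^i into its ordinary and non-ordinary parts with respect to T^i, one obtains a decomposition C• = C•_ord ⊕ C•_non-ord of complexes of R-modules, and for each integer i there are canonical isomorphisms H^i(C•_ord) ≅ H^i(C•)_ord and H^i(C•_non-ord) ≅ H^i(C•)_non-ord, where the right-hand sides are the ordinary and non-ordinary parts of H^i(C•) with respect to the endomorphism induced by T. -/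

import Mathlib

open CategoryTheory IsLocalRing

/-- An ordinary decomposition of `M` with respect to `T`: a `T`-invariant direct sum
decomposition `M = M_ord ⊕ M_non-ord` such that `T` is invertible on `M_ord` and
topologically nilpotent on `M_non-ord` for the `𝔪_R`-adic topology. -/
def IsOrdinaryDecomp {R : Type} [CommRing R] [IsLocalRing R] {M : Type} [AddCommGroup M]
    [Module R M] (T : Module.End R M) (Mo Mn : Submodule R M) : Prop :=
  IsCompl Mo Mn ∧
  Submodule.map T Mo ≤ Mo ∧ Submodule.map T Mn ≤ Mn ∧
  (∀ y ∈ Mo, ∃ x ∈ Mo, T x = y) ∧ (∀ x ∈ Mo, T x = 0 → x = 0) ∧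
  (∀ n : ℕ, ∃ N : ℕ, Submodule.map (T ^ N) Mn ≤ (IsLocalRing.maximalIdeal R) ^ n • Mn)

/-- The subcomplex of `C` determined by a family of submodules preserved by the
differentials. -/
noncomputable def subCx {R : Type} [CommRing R] (C : CochainComplex (ModuleCat R) ℤ)
    (P : ∀ i : ℤ, Submodule R (C.X i))
    (hP : ∀ i j : ℤ, Submodule.map (C.d i j).hom (P i) ≤ P j) :
    CochainComplex (ModuleCat R) ℤ where
  X i := ModuleCat.of R (P i)
  d i j := ModuleCat.ofHom (LinearMap.restrict (C.d i j).hom (fun x hx => hP i j (Submodule.mem_map_of_mem hx)))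
  shape i j h := by
    refine ModuleCat.hom_ext (LinearMap.ext fun x => Subtype.ext ?_)
    have h0 : C.d i j = 0 := C.shape i j h
    show (C.d i j).hom x.1 = _
    rw [h0]
    rfl
  d_comp_d' i j k hij hjk := by
    refine ModuleCat.hom_ext (LinearMap.ext fun x => Subtype.ext ?_)
    have h : (C.d i j ≫ C.d j k) = 0 := C.d_comp_d i j k
    show (C.d j k).hom ((C.d i j).hom x.1) = _
    calc (C.d j k).hom ((C.d i j).hom x.1) = (C.d i j ≫ C.d j k).hom x.1 := rfl
      _ = _ := by rw [h]; rfl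

/-!
Both parts are functorial. For finite modules over a Noetherian local ring, `M_ord` consists of
the elements lying in `range (T ^ N)` for every `N`, and `M_non-ord` of those that some power of
`T` pushes into `𝔪ⁿ M`, for every `n` (by Krull's intersection theorem). Hence any map intertwining
the two endomorphisms preserves both parts. Applied to the differentials, this shows that
`C_ord` and `C_non-ord` are subcomplexes and `C = C_ord ⊕ C_non-ord`. Homology is additive, so
`H^i(C)` is the internal direct sum of the images of `H^i(C_ord)` and `H^i(C_non-ord)`. `T` acts
on `C_ord` by an automorphism of complexes, so it acts invertibly on `H^i(C_ord)`. The
Artin–Rees lemma carries topological nilpotence from `C_non-ord^i` to its cycles, and from there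
it passes to the quotient `H^i(C_non-ord)`.
-/

open Function LinearMap Submodule

section Krull

variable {R M : Type*} [CommRing R] [AddCommGroup M] [Module R M]

theorem eq_zero_of_forall_mem_maximalIdeal_pow_smul_top [IsNoetherianRing R] [IsLocalRing R]
    [Module.Finite R M] {x : M} (hx : ∀ n : ℕ, x ∈ maximalIdeal R ^ n • (⊤ : Submodule R M)) :
    x = 0 := by
  have hbot := Ideal.iInf_pow_smul_eq_bot_of_isLocalRing (M := M) (maximalIdeal R)
    (maximalIdeal.isMaximal R).ne_top
  simpa [hbot] using (mem_iInf _).mpr hx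

end Krull

namespace Submodule

variable {R M N : Type*} [CommRing R] [AddCommGroup M] [Module R M] [AddCommGroup N] [Module R N]

theorem mem_smul_top_of_apply_mem {f : M →ₗ[R] N} (hf : Bijective f) {I : Ideal R} {x : M}
    (hx : f x ∈ I • (⊤ : Submodule R N)) : x ∈ I • (⊤ : Submodule R M) := by
  rw [← range_eq_top.mpr hf.2, range_eq_map, ← map_smul''] at hx
  obtain ⟨y, hy, hyx⟩ := hx
  exact hf.1 hyx ▸ hy

theorem projection_comp_of_map_le {p q : Submodule R M} {p' q' : Submodule R N}
    (hpq : IsCompl p q) (hpq' : IsCompl p' q') {f : M →ₗ[R] N} (hp : map f p ≤ p')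
    (hq : map f q ≤ q') : p'.projection q' hpq' ∘ₗ f = f ∘ₗ p.projection q hpq := by
  ext x
  conv_lhs => rw [← projection_add_projection_eq_self hpq x]
  rw [LinearMap.comp_apply, map_add, map_add,
    projection_apply_of_mem_left hpq' (hp (mem_map_of_mem (projection_apply_mem hpq x))),
    projection_apply_of_mem_right hpq' (hq (mem_map_of_mem (projection_apply_mem hpq.symm x))),
    add_zero, LinearMap.comp_apply]

end Submodule

namespace Module.End

variable {R M N : Type*} [CommRing R] [AddCommGroup M] [Module R M] [AddCommGroup N] [Module R N]

def IsAdicNilpotent (I : Ideal R) (S : Module.End R M) : Prop :=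
  ∀ n : ℕ, ∃ N : ℕ, range (S ^ N) ≤ I ^ n • ⊤

namespace IsAdicNilpotent

variable {I : Ideal R} {S : Module.End R M} {S' : Module.End R N}

theorem of_surjective (hS : IsAdicNilpotent I S) {q : M →ₗ[R] N} (hq : Function.Surjective q)
    (h : S' ∘ₗ q = q ∘ₗ S) : IsAdicNilpotent I S' := by
  intro n
  obtain ⟨N, hN⟩ := hS n
  refine ⟨N, ?_⟩
  rw [← range_comp_of_range_eq_top _ (range_eq_top.mpr hq), commute_pow_left_of_commute h,
    range_comp]
  calc map q (range (S ^ N)) ≤ map q (I ^ n • ⊤) := map_mono hN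
    _ ≤ I ^ n • ⊤ := by rw [map_smul'']; exact smul_mono_right _ le_top

/-- Artin–Rees: the `I`-adic topology of `M` induces that of a submodule. -/
theorem of_injective [IsNoetherianRing R] [Module.Finite R M] (hS : IsAdicNilpotent I S)
    {j : N →ₗ[R] M} (hj : Function.Injective j) (h : j ∘ₗ S' = S ∘ₗ j) : IsAdicNilpotent I S' := by
  intro n
  obtain ⟨k, hk⟩ := I.exists_pow_inf_eq_pow_smul (range j)
  obtain ⟨N, hN⟩ := hS (n + k)
  refine ⟨N, ?_⟩
  rintro _ ⟨y, rfl⟩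
  have hmem : j ((S' ^ N) y) ∈ I ^ (n + k) • ⊤ ⊓ range j := by
    refine ⟨?_, mem_range_self j _⟩
    rw [← LinearMap.comp_apply, ← commute_pow_left_of_commute h.symm]
    exact hN (mem_range_self _ _)
  rw [hk _ (Nat.le_add_left k n), Nat.add_sub_cancel] at hmem
  have hmem' : j ((S' ^ N) y) ∈ map j (I ^ n • ⊤) := by
    rw [map_smul'', ← range_eq_map]
    exact (smul_mono_right _ inf_le_right :
      I ^ n • (I ^ k • ⊤ ⊓ range j) ≤ I ^ n • range j) hmem
  obtain ⟨z, hz, hzy⟩ := hmem'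
  exact hj hzy ▸ hz

end IsAdicNilpotent

end Module.End

namespace IsOrdinaryDecomp

variable {R : Type} [CommRing R] [IsLocalRing R]
  {M M' : Type} [AddCommGroup M] [Module R M] [AddCommGroup M'] [Module R M']
  {T : Module.End R M} {Mo Mn : Submodule R M}

theorem isCompl (h : IsOrdinaryDecomp T Mo Mn) : IsCompl Mo Mn := h.1

theorem map_ord_le_self (h : IsOrdinaryDecomp T Mo Mn) : map T Mo ≤ Mo := h.2.1

theorem map_nonOrd_le_self (h : IsOrdinaryDecomp T Mo Mn) : map T Mn ≤ Mn := h.2.2.1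

theorem exists_map_pow_le (h : IsOrdinaryDecomp T Mo Mn) (n : ℕ) :
    ∃ N : ℕ, map (T ^ N) Mn ≤ maximalIdeal R ^ n • Mn :=
  h.2.2.2.2.2 n

theorem bijective_restrict (h : IsOrdinaryDecomp T Mo Mn) :
    Bijective (T.restrict fun _ hx => h.map_ord_le_self (mem_map_of_mem hx)) := by
  obtain ⟨-, -, -, hsurj, hinj, -⟩ := h
  refine ⟨fun x y hxy => ?_, fun y => ?_⟩
  · have hxy' : T (x - y : M) = 0 := by
      rw [map_sub, sub_eq_zero]
      exact congrArg Subtype.val hxy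
    exact Subtype.ext (sub_eq_zero.mp (hinj _ (sub_mem x.2 y.2) hxy'))
  · obtain ⟨x, hx, hxy⟩ := hsurj y y.2
    exact ⟨⟨x, hx⟩, Subtype.ext hxy⟩

theorem isAdicNilpotent_restrict (h : IsOrdinaryDecomp T Mo Mn) :
    Module.End.IsAdicNilpotent (maximalIdeal R)
      (T.restrict fun _ hx => h.map_nonOrd_le_self (mem_map_of_mem hx)) := by
  intro n
  obtain ⟨N, hN⟩ := h.exists_map_pow_le n
  refine ⟨N, ?_⟩
  rintro _ ⟨x, rfl⟩
  rw [Module.End.pow_restrict, mem_smul_top_iff, coe_restrict_apply]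
  exact hN (mem_map_of_mem x.2)

theorem mem_range_pow_of_mem_ord (h : IsOrdinaryDecomp T Mo Mn) {x : M} (hx : x ∈ Mo) (N : ℕ) :
    x ∈ range (T ^ N) := by
  obtain ⟨y, hy⟩ := (h.bijective_restrict.iterate N).2 ⟨x, hx⟩
  rw [← Module.End.coe_pow, Module.End.pow_restrict] at hy
  exact ⟨y, congrArg Subtype.val hy⟩

variable [IsNoetherianRing R]

theorem mem_ord_of_forall_mem_range_pow [Module.Finite R M] (h : IsOrdinaryDecomp T Mo Mn) {x : M}
    (hx : ∀ N : ℕ, x ∈ range (T ^ N)) : x ∈ Mo := by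
  rw [← projection_apply_eq_zero_iff h.isCompl.symm]
  refine eq_zero_of_forall_mem_maximalIdeal_pow_smul_top (R := R) fun n => ?_
  obtain ⟨N, hN⟩ := h.exists_map_pow_le n
  obtain ⟨y, rfl⟩ := hx N
  have hcomm : Commute (Mn.projection Mo h.isCompl.symm) T :=
    projection_comp_of_map_le _ _ h.map_nonOrd_le_self h.map_ord_le_self
  rw [← Module.End.mul_apply, (hcomm.pow_right N).eq, Module.End.mul_apply]
  exact Submodule.smul_mono le_rfl le_top (hN (mem_map_of_mem (projection_apply_mem _ y)))

theorem mem_nonOrd_of_forall_pow_mem [Module.Finite R M] (h : IsOrdinaryDecomp T Mo Mn) {x : M}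
    (hx : ∀ n : ℕ, ∃ N : ℕ, (T ^ N) x ∈ maximalIdeal R ^ n • (⊤ : Submodule R M)) : x ∈ Mn := by
  rw [← projection_apply_eq_zero_iff h.isCompl]
  refine eq_zero_of_forall_mem_maximalIdeal_pow_smul_top (R := R) fun n => ?_
  obtain ⟨N, hN⟩ := hx n
  have hcomm : Commute (Mo.projection Mn h.isCompl) T :=
    projection_comp_of_map_le _ _ h.map_ord_le_self h.map_nonOrd_le_self
  have hTN : (T ^ N) (Mo.projection Mn h.isCompl x) ∈ maximalIdeal R ^ n • Mo := by
    have hproj := mem_map_of_mem (f := Mo.projection Mn h.isCompl) hN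
    rwa [map_smul'', Submodule.map_top, range_projection, ← LinearMap.comp_apply,
      ← Module.End.mul_eq_comp, (hcomm.pow_right N).eq] at hproj
  have hbij := h.bijective_restrict.iterate N
  rw [← Module.End.coe_pow, Module.End.pow_restrict] at hbij
  have ha := mem_smul_top_of_apply_mem hbij
    ((mem_smul_top_iff _ _ _).mpr hTN : _ ∈ maximalIdeal R ^ n • ⊤)
  exact Submodule.smul_mono le_rfl le_top ((mem_smul_top_iff _ _ _).mp ha)

variable [Module.Finite R M'] {T' : Module.End R M'} {Mo' Mn' : Submodule R M'} {f : M →ₗ[R] M'}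

theorem map_ord_le_of_comp_eq (h : IsOrdinaryDecomp T Mo Mn) (h' : IsOrdinaryDecomp T' Mo' Mn')
    (hf : T' ∘ₗ f = f ∘ₗ T) : map f Mo ≤ Mo' := by
  rintro _ ⟨x, hx, rfl⟩
  refine h'.mem_ord_of_forall_mem_range_pow fun N => ?_
  obtain ⟨y, rfl⟩ := h.mem_range_pow_of_mem_ord hx N
  exact ⟨f y, congr($(Module.End.commute_pow_left_of_commute hf N) y)⟩

theorem map_nonOrd_le_of_comp_eq (h : IsOrdinaryDecomp T Mo Mn)
    (h' : IsOrdinaryDecomp T' Mo' Mn') (hf : T' ∘ₗ f = f ∘ₗ T) : map f Mn ≤ Mn' := by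
  rintro _ ⟨x, hx, rfl⟩
  refine h'.mem_nonOrd_of_forall_pow_mem fun n => ?_
  obtain ⟨N, hN⟩ := h.exists_map_pow_le n
  refine ⟨N, ?_⟩
  rw [← LinearMap.comp_apply, Module.End.commute_pow_left_of_commute hf, LinearMap.comp_apply]
  have hfx := mem_map_of_mem (f := f) (hN (mem_map_of_mem hx))
  rw [map_smul''] at hfx
  exact Submodule.smul_mono le_rfl le_top hfx

end IsOrdinaryDecomp

section Assembly

variable {R : Type} [CommRing R] [IsLocalRing R] {M A B : Type}
  [AddCommGroup M] [Module R M] [AddCommGroup A] [Module R A] [AddCommGroup B] [Module R B]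

theorem isOrdinaryDecomp_range {T : Module.End R M} {TA : Module.End R A}
    {TB : Module.End R B} {iA : A →ₗ[R] M} {iB : B →ₗ[R] M} (hc : IsCompl (range iA) (range iB))
    (hiA : Function.Injective iA) (hA : T ∘ₗ iA = iA ∘ₗ TA) (hB : T ∘ₗ iB = iB ∘ₗ TB)
    (hTA : Bijective TA) (hTB : TB.IsAdicNilpotent (maximalIdeal R)) :
    IsOrdinaryDecomp T (range iA) (range iB) := by
  refine ⟨hc, ?_, ?_, ?_, ?_, fun n => ?_⟩
  · rw [← range_comp, hA]
    exact range_comp_le_range _ _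
  · rw [← range_comp, hB]
    exact range_comp_le_range _ _
  · rintro _ ⟨a, rfl⟩
    obtain ⟨a', rfl⟩ := hTA.2 a
    exact ⟨iA a', mem_range_self _ _, congr($hA a')⟩
  · rintro _ ⟨a, rfl⟩ h
    rw [← LinearMap.comp_apply, hA, LinearMap.comp_apply, map_eq_zero_iff _ hiA,
      map_eq_zero_iff _ hTA.1] at h
    rw [h, map_zero]
  · obtain ⟨N, hN⟩ := hTB n
    refine ⟨N, ?_⟩
    rw [← range_comp, Module.End.commute_pow_left_of_commute hB, range_comp, range_eq_map iB,
      ← map_smul'']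
    exact map_mono hN

end Assembly

namespace ModuleCat

variable {R : Type} [CommRing R] {A B M : ModuleCat R}

theorem isCompl_range_of_biprod {iA : A ⟶ M} {iB : B ⟶ M} {pA : M ⟶ A} {pB : M ⟶ B}
    (hAA : iA ≫ pA = 𝟙 A) (hBA : iB ≫ pA = 0) (hsum : pA ≫ iA + pB ≫ iB = 𝟙 M) :
    IsCompl (range iA.hom) (range iB.hom) := by
  refine ⟨disjoint_def.mpr ?_, codisjoint_iff.mpr (eq_top_iff.mpr fun x _ => ?_)⟩
  · rintro _ ⟨a, rfl⟩ ⟨b, hb⟩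
    have ha : a = 0 := by
      rw [← ModuleCat.id_apply A a, ← hAA, ModuleCat.comp_apply, ← hb, ← ModuleCat.comp_apply, hBA]
      rfl
    rw [ha, map_zero]
  · have hx : iA (pA x) + iB (pB x) = x := congr($(hsum).hom x)
    exact mem_sup.mpr ⟨_, mem_range_self _ _, _, mem_range_self _ _, hx⟩

end ModuleCat

namespace HomologicalComplex

variable {R : Type} [CommRing R] {ι : Type*} {c : ComplexShape ι}
  {K L : HomologicalComplex (ModuleCat R) c}

theorem bijective_homologyMap {φ : K ⟶ L} (hφ : ∀ i, Bijective (φ.f i).hom) (i : ι) :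
    Bijective (homologyMap φ i).hom := by
  have (j : ι) : IsIso (φ.f j) := (ConcreteCategory.isIso_iff_bijective _).mpr (hφ j)
  have := Hom.isIso_of_components φ
  exact (ConcreteCategory.isIso_iff_bijective _).mp inferInstance

theorem isAdicNilpotent_homologyMap [IsNoetherianRing R] {I : Ideal R} {φ : K ⟶ K} {i : ι}
    [Module.Finite R (K.X i)] (h : Module.End.IsAdicNilpotent I (φ.f i).hom) :
    Module.End.IsAdicNilpotent I (homologyMap φ i).hom := by
  have hZ : Module.End.IsAdicNilpotent I (cyclesMap φ i).hom :=
    h.of_injective ((ModuleCat.mono_iff_injective _).mp inferInstance)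
      congr($(cyclesMap_i φ i).hom)
  exact hZ.of_surjective ((ModuleCat.epi_iff_surjective _).mp inferInstance)
    congr($(homologyπ_naturality φ i).hom)

end HomologicalComplex

namespace subCx

open HomologicalComplex

variable {R : Type} [CommRing R] {C : CochainComplex (ModuleCat R) ℤ}
  {P Q : ∀ i : ℤ, Submodule R (C.X i)}
  (hP : ∀ i j : ℤ, map (C.d i j).hom (P i) ≤ P j)
  (hQ : ∀ i j : ℤ, map (C.d i j).hom (Q i) ≤ Q j)

def ι : subCx C P hP ⟶ C where
  f i := ModuleCat.ofHom (P i).subtype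

def restrict (f : C ⟶ C) (hf : ∀ i, map (f.f i).hom (P i) ≤ P i) :
    subCx C P hP ⟶ subCx C P hP where
  f i := ModuleCat.ofHom ((f.f i).hom.restrict fun _ hx => hf i (mem_map_of_mem hx))
  comm' i j _ := by
    ext x
    exact Subtype.ext congr($(f.comm i j).hom x.1)

noncomputable def proj (hc : ∀ i, IsCompl (P i) (Q i)) : C ⟶ subCx C P hP where
  f i := ModuleCat.ofHom ((P i).projectionOnto (Q i) (hc i))
  comm' i j _ := by
    ext x
    exact Subtype.ext congr($(projection_comp_of_map_le (hc i) (hc j) (hP i j) (hQ i j)) x).symm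

variable {hP hQ}

theorem ι_proj (hc : ∀ i, IsCompl (P i) (Q i)) : ι hP ≫ proj hP hQ hc = 𝟙 _ := by
  ext i x
  exact projectionOnto_apply_left (hc i) x

theorem ι_proj_eq_zero (hc : ∀ i, IsCompl (P i) (Q i)) : ι hQ ≫ proj hP hQ hc = 0 := by
  ext i x
  exact projectionOnto_apply_right (hc i) x

theorem proj_ι_add_proj_ι (hc : ∀ i, IsCompl (P i) (Q i)) :
    proj hP hQ hc ≫ ι hP + proj hQ hP (fun i => (hc i).symm) ≫ ι hQ = 𝟙 C := by
  ext i x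
  exact projection_add_projection_eq_self (hc i) x

theorem restrict_ι (f : C ⟶ C) (hf : ∀ i, map (f.f i).hom (P i) ≤ P i) :
    restrict hP f hf ≫ ι hP = ι hP ≫ f := rfl

theorem isCompl_range_homologyMap_ι (hc : ∀ i, IsCompl (P i) (Q i)) (i : ℤ) :
    IsCompl (range (homologyMap (ι hP) i).hom) (range (homologyMap (ι hQ) i).hom) :=
  ModuleCat.isCompl_range_of_biprod (pA := homologyMap (proj hP hQ hc) i)
    (pB := homologyMap (proj hQ hP fun i => (hc i).symm) i)
    (by rw [← homologyMap_comp, ι_proj, homologyMap_id])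
    (by rw [← homologyMap_comp, ι_proj_eq_zero, homologyMap_zero])
    (by rw [← homologyMap_comp, ← homologyMap_comp, ← homologyMap_add, proj_ι_add_proj_ι,
      homologyMap_id])

theorem injective_homologyMap_ι (hQ : ∀ i j : ℤ, map (C.d i j).hom (Q i) ≤ Q j)
    (hc : ∀ i, IsCompl (P i) (Q i)) (i : ℤ) :
    Function.Injective (homologyMap (ι hP) i).hom :=
  (ModuleCat.mono_iff_injective _).mp <| mono_of_mono_fac (f := homologyMap (proj hP hQ hc) i)
    (by rw [← homologyMap_comp, ι_proj, homologyMap_id])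

theorem homologyMap_comp_ι (f : C ⟶ C) (hf : ∀ i, map (f.f i).hom (P i) ≤ P i) (i : ℤ) :
    (homologyMap f i).hom ∘ₗ (homologyMap (ι hP) i).hom =
      (homologyMap (ι hP) i).hom ∘ₗ (homologyMap (restrict hP f hf) i).hom := by
  rw [← ModuleCat.hom_comp, ← ModuleCat.hom_comp, ← homologyMap_comp, ← homologyMap_comp,
    restrict_ι]

end subCx

theorem statement_13_general (R : Type) [CommRing R] [IsNoetherianRing R] [IsLocalRing R]
    (C : CochainComplex (ModuleCat R) ℤ) (hfin : ∀ i : ℤ, Module.Finite R (C.X i))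
    (T : C ⟶ C)
    (Mo Mn : ∀ i : ℤ, Submodule R (C.X i))
    (hMi : ∀ i : ℤ, IsOrdinaryDecomp ((T.f i).hom : Module.End R (C.X i)) (Mo i) (Mn i)) :
    ∃ (hdo : ∀ i j : ℤ, Submodule.map (C.d i j).hom (Mo i) ≤ Mo j)
      (hdn : ∀ i j : ℤ, Submodule.map (C.d i j).hom (Mn i) ≤ Mn j),
      ∀ i : ℤ, ∃ Ho Hn : Submodule R ↥(C.homology i),
        IsOrdinaryDecomp
          (((HomologicalComplex.homologyFunctor (ModuleCat R) (ComplexShape.up ℤ) i).map T :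
            C.homology i ⟶ C.homology i).hom : Module.End R ↥(C.homology i)) Ho Hn ∧
        Nonempty (↥((subCx C Mo hdo).homology i) ≃ₗ[R] ↥Ho) ∧
        Nonempty (↥((subCx C Mn hdn).homology i) ≃ₗ[R] ↥Hn) := by
  have hdT (i j : ℤ) : (T.f j).hom ∘ₗ (C.d i j).hom = (C.d i j).hom ∘ₗ (T.f i).hom :=
    congr($(T.comm i j).hom).symm
  have hdo (i j : ℤ) : map (C.d i j).hom (Mo i) ≤ Mo j :=
    have := hfin j; (hMi i).map_ord_le_of_comp_eq (hMi j) (hdT i j)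
  have hdn (i j : ℤ) : map (C.d i j).hom (Mn i) ≤ Mn j :=
    have := hfin j; (hMi i).map_nonOrd_le_of_comp_eq (hMi j) (hdT i j)
  have hc (i : ℤ) : IsCompl (Mo i) (Mn i) := (hMi i).isCompl
  refine ⟨hdo, hdn, fun i => ⟨_, _, ?_,
    ⟨.ofInjective _ (subCx.injective_homologyMap_ι hdn hc i)⟩,
    ⟨.ofInjective _ (subCx.injective_homologyMap_ι hdo (fun j => (hc j).symm) i)⟩⟩⟩
  have := hfin i
  have : Module.Finite R ((subCx C Mn hdn).X i) := inferInstanceAs (Module.Finite R (Mn i))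
  exact isOrdinaryDecomp_range (subCx.isCompl_range_homologyMap_ι hc i)
    (subCx.injective_homologyMap_ι hdn hc i)
    (subCx.homologyMap_comp_ι T (fun j => (hMi j).map_ord_le_self) i)
    (subCx.homologyMap_comp_ι T (fun j => (hMi j).map_nonOrd_le_self) i)
    (HomologicalComplex.bijective_homologyMap (fun j => (hMi j).bijective_restrict) i)
    (HomologicalComplex.isAdicNilpotent_homologyMap (hMi i).isAdicNilpotent_restrict)

theorem statement_13 (p : ℕ) [Fact p.Prime] (E : Type) [Field E] [Algebra ℚ_[p] E]
    [FiniteDimensional ℚ_[p] E] [Algebra ℤ_[p] E] [IsScalarTower ℤ_[p] ℚ_[p] E]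
    (R : Type) [CommRing R] [Algebra (integralClosure ℤ_[p] E) R]
    [IsNoetherianRing R] [IsLocalRing R] [IsAdicComplete (maximalIdeal R) R]
    (C : CochainComplex (ModuleCat R) ℤ) (hfin : ∀ i : ℤ, Module.Finite R (C.X i))
    (T : C ⟶ C)
    (Mo Mn : ∀ i : ℤ, Submodule R (C.X i))
    (hMi : ∀ i : ℤ, IsOrdinaryDecomp ((T.f i).hom : Module.End R (C.X i)) (Mo i) (Mn i)) :
    ∃ (hdo : ∀ i j : ℤ, Submodule.map (C.d i j).hom (Mo i) ≤ Mo j)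
      (hdn : ∀ i j : ℤ, Submodule.map (C.d i j).hom (Mn i) ≤ Mn j),
      ∀ i : ℤ, ∃ Ho Hn : Submodule R ↥(C.homology i),
        IsOrdinaryDecomp
          (((HomologicalComplex.homologyFunctor (ModuleCat R) (ComplexShape.up ℤ) i).map T :
            C.homology i ⟶ C.homology i).hom : Module.End R ↥(C.homology i)) Ho Hn ∧
        Nonempty (↥((subCx C Mo hdo).homology i) ≃ₗ[R] ↥Ho) ∧
        Nonempty (↥((subCx C Mn hdn).homology i) ≃ₗ[R] ↥Hn) :=
  statement_13_general R C hfin T Mo Mn hMi
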